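/- For all m, n ≥ 1 and k ≥ 0, the cardinality of U_{m,n}^(k) equals Σ_{ℓ'=1}^{m} Σ_{ℓ''=1}^{n} (S_m^k)_{1,ℓ'} · (S_n^k)_{1,ℓ''}, where (S_m^k)_{1,ℓ'} denotes the (1,ℓ') entry of the k-th power of the matrix S_m. -/

import Mathlib

open Finset

/-- `Π·h`: the vector whose `q`-th entry is the union of the `Π p` over all `p` with `h p = q`. -/
def dotAct {n : ℕ} (Pi : Fin n → Finset ℕ) (h : Fin n → Fin n) : Fin n → Finset ℕ :=
  fun q => (Finset.univ.filter (fun p => h p = q)).biUnion Pi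

/-- Entrywise union of two vectors of sets. -/
def vUnion {n : ℕ} (Pi Pi' : Fin n → Finset ℕ) : Fin n → Finset ℕ :=
  fun q => Pi q ∪ Pi' q

/-- `r = max (π₀ ∪ … ∪ π_{n−1})`. -/
def vMax {n : ℕ} (Pi : Fin n → Finset ℕ) : ℕ :=
  (Finset.univ.sup Pi).sup id

/-- `Π↑`: add `r = max (π₀ ∪ … ∪ π_{n−1})` to every element of every entry. -/
def vUp {n : ℕ} (Pi : Fin n → Finset ℕ) : Fin n → Finset ℕ :=
  fun q => (Pi q).image (· + vMax Pi)

/-- A `k`-EXPcomposition of size `n`: pairwise disjoint entries whose union is `{1,…,2^k}`. -/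
def IsEXP {n : ℕ} (k : ℕ) (Pi : Fin n → Finset ℕ) : Prop :=
  (∀ p q : Fin n, p ≠ q → Disjoint (Pi p) (Pi q)) ∧
    Finset.univ.sup Pi = Finset.Icc 1 (2 ^ k)

/-- A `k`-Rvalid vector of size `n`. -/
def IsRvalid {n : ℕ} (k : ℕ) (ρ : Fin n → Finset ℕ) : Prop :=
  IsEXP k ρ ∧ (∀ p : Fin n, p.val = 0 → 1 ∈ ρ p) ∧
    ∀ k' < k, ∀ i ∈ Finset.Icc 1 (2 ^ k'), ∀ j ∈ Finset.Icc 1 (2 ^ k'),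
      (∃ α, i ∈ ρ α ∧ j ∈ ρ α) → ∃ β, i + 2 ^ k' ∈ ρ β ∧ j + 2 ^ k' ∈ ρ β

/-- A `k`-Lvalid vector of size `m`. -/
def IsLvalid {m : ℕ} (k : ℕ) (lam : Fin m → Finset ℕ) : Prop :=
  IsEXP k lam ∧ (∀ p : Fin m, p.val = 0 → 2 ^ k ∈ lam p) ∧
    ∀ k' < k, ∀ i ∈ Finset.Icc 1 (2 ^ k'), ∀ j ∈ Finset.Icc 1 (2 ^ k'),
      (∃ α, 2 ^ k + 1 - i ∈ lam α ∧ 2 ^ k + 1 - j ∈ lam α) →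
        ∃ β, 2 ^ k + 1 - (i + 2 ^ k') ∈ lam β ∧ 2 ^ k + 1 - (j + 2 ^ k') ∈ lam β

/-- Number of nonempty entries of a vector of sets. -/
def nne {n : ℕ} (Pi : Fin n → Finset ℕ) : ℕ :=
  (Finset.univ.filter (fun q => Pi q ≠ ∅)).card

/-- `succ(P) = {P ∪ (P·g)↑ : g}`. -/
def succSet {n : ℕ} (P : Fin n → Finset ℕ) : Finset (Fin n → Finset ℕ) :=
  (Finset.univ : Finset (Fin n → Fin n)).image (fun g => vUnion P (vUp (dotAct P g)))

/-- The graded set `U_{m,n}^{(k)}` of U-pairs. -/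
def Uset (m n : ℕ) : ℕ → Set ((Fin m → Finset ℕ) × (Fin n → Finset ℕ))
  | 0 => {x | x = (fun p => if p.val = 0 then {1} else ∅,
                   fun q => if q.val = 0 then {1} else ∅)}
  | k + 1 => {x | ∃ L P, (L, P) ∈ Uset m n k ∧ ∃ (f : Fin m → Fin m) (g : Fin n → Fin n),
      x = (vUnion (dotAct L f) (vUp L), vUnion P (vUp (dotAct P g)))}

/-- The `r`-Stirling number: partitions of `{1,…,a}` into `b` nonempty blocks
with `1,…,r` in pairwise distinct blocks. -/
noncomputable def rStirling (a b r : ℕ) : ℕ :=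
  Set.ncard {C : Finset (Finset ℕ) |
    C.card = b ∧ (∅ ∉ C) ∧
    (∀ B ∈ C, ∀ B' ∈ C, B ≠ B' → Disjoint B B') ∧
    C.sup id = Finset.Icc 1 a ∧
    ∀ x ∈ Finset.Icc 1 r, ∀ y ∈ Finset.Icc 1 r, x ≠ y →
      ∀ B ∈ C, x ∈ B → y ∉ B}

/-- The Stirling number of the second kind: the number of partitions of an
`a`-element set into `b` nonempty blocks. -/
noncomputable def stirling2 (a b : ℕ) : ℕ := rStirling a b 0

/-- The entry `s_n^{(i,j)}` (with `1 ≤ i,j ≤ n`). -/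
noncomputable def sEntry (n i j : ℕ) : ℕ :=
  if i ≤ j then
    (j - i).factorial * Nat.choose (n - i) (j - i) *
      ∑ α ∈ Finset.Icc (j - i) i, Nat.choose i α * i ^ (i - α) * stirling2 α (j - i)
  else 0

/-- The matrix `S_n`, with rows and columns indexed by `{1,…,n}`. -/
noncomputable def Smat (n : ℕ) : Matrix (Fin n) (Fin n) ℕ :=
  fun i j => sEntry n (i.val + 1) (j.val + 1)

/-- One step of the shuffle-automaton action on subsets of the grid. -/
def stepE {m n : ℕ} (E : Finset (Fin m × Fin n)) (f : Fin m → Fin m) (g : Fin n → Fin n) :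
    Finset (Fin m × Fin n) :=
  E.image (fun p => (f p.1, p.2)) ∪ E.image (fun p => (p.1, g p.2))

/-- Reachability from `{(0,0)}` by finitely many steps. -/
def Reach {m n : ℕ} (hm : 0 < m) (hn : 0 < n) (E : Finset (Fin m × Fin n)) : Prop :=
  Relation.ReflTransGen (fun E1 E2 => ∃ f g, E2 = stepE E1 f g)
    {(⟨0, hm⟩, ⟨0, hn⟩)} E

/-- Reachability from `{(0,0)}` in at most `t` steps. -/
def ReachIn {m n : ℕ} (hm : 0 < m) (hn : 0 < n) :
    ℕ → Finset (Fin m × Fin n) → Prop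
  | 0, E => E = {(⟨0, hm⟩, ⟨0, hn⟩)}
  | t + 1, E => ReachIn hm hn t E ∨
      ∃ E' f g, ReachIn hm hn t E' ∧ E = stepE E' f g

/-- `s(Λ,P) = {(i,j) : λ_i ∩ ρ_j ≠ ∅}`. -/
def sTab {m n : ℕ} (L : Fin m → Finset ℕ) (P : Fin n → Finset ℕ) :
    Finset (Fin m × Fin n) :=
  Finset.univ.filter (fun p => (L p.1 ∩ P p.2).Nonempty)

/-!
The two coordinates of a U-pair evolve independently, so `U^(k)` is the product of the `k`-th
generations of the processes `Λ ↦ Λ·f ∪ Λ↑` and `P ↦ P ∪ (P·g)↑`. The vectors of generation `k`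
are compositions of `{1,…,2^k}`, and a successor remembers its predecessor and the map on the
predecessor's support `S` (one of them sits in the lower, the other in the upper half of
`{1,…,2^(k+1)}`). Hence the successors of a vector with `i` nonempty entries correspond to maps
`g : S → Fin n`, and such a successor has `#(g(S) ∪ S)` nonempty entries. Choosing the `j - i` new
entries, their preimage under `g` and a surjection onto them shows that there are `s_n^(i,j)` maps
with `#(g(S) ∪ S) = j`, so the vectors of generation `k` with `j` nonempty entries number
`(S_n^k)_{1,j}`.
-/

section Surjections
variable {a b : ℕ}

def fiberBlock (f : Fin a → Fin b) (y : Fin b) : Finset ℕ :=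
  (univ.filter (f · = y)).image fun x : Fin a => (x : ℕ) + 1

lemma mem_fiberBlock {f : Fin a → Fin b} {y : Fin b} {n : ℕ} :
    n ∈ fiberBlock f y ↔ ∃ x : Fin a, f x = y ∧ (x : ℕ) + 1 = n := by
  simp [fiberBlock]

lemma succ_mem_fiberBlock {f : Fin a → Fin b} {y : Fin b} {x : Fin a} :
    (x : ℕ) + 1 ∈ fiberBlock f y ↔ f x = y := by
  simp [fiberBlock, Fin.val_inj]

lemma fiberBlock_subset (f : Fin a → Fin b) (y : Fin b) : fiberBlock f y ⊆ Icc 1 a := by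
  intro n hn
  obtain ⟨x, -, rfl⟩ := mem_fiberBlock.mp hn
  simp

lemma fiberBlock_injective : Function.Injective (fiberBlock (a := a) (b := b)) := by
  intro f f' h
  funext x
  have hx := succ_mem_fiberBlock.mpr (rfl : f x = f x)
  rw [h] at hx
  exact (succ_mem_fiberBlock.mp hx).symm

lemma fiberBlock_injective_of_surjective {f : Fin a → Fin b} (hf : Function.Surjective f) :
    Function.Injective (fiberBlock f) := by
  intro y y' h
  obtain ⟨x, rfl⟩ := hf y
  have hx := succ_mem_fiberBlock.mpr (rfl : f x = f x)
  rw [h] at hx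
  exact succ_mem_fiberBlock.mp hx

def setPartitions (a b : ℕ) : Finset (Finset (Finset ℕ)) :=
  (Icc 1 a).powerset.powerset.filter fun C => #C = b ∧ ∅ ∉ C ∧
    (∀ B ∈ C, ∀ B' ∈ C, B ≠ B' → Disjoint B B') ∧ C.sup id = Icc 1 a

lemma mem_setPartitions {C : Finset (Finset ℕ)} : C ∈ setPartitions a b ↔
    #C = b ∧ ∅ ∉ C ∧ (∀ B ∈ C, ∀ B' ∈ C, B ≠ B' → Disjoint B B') ∧ C.sup id = Icc 1 a := by
  refine ⟨fun h => (mem_filter.mp h).2, fun h => mem_filter.mpr ⟨?_, h⟩⟩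
  refine mem_powerset.mpr fun B hB => mem_powerset.mpr ?_
  exact h.2.2.2 ▸ le_sup (f := id) hB

lemma stirling2_eq_card_setPartitions (a b : ℕ) : stirling2 a b = #(setPartitions a b) := by
  rw [stirling2, rStirling, ← Set.ncard_coe_finset]
  congr 1
  ext C
  simp only [Set.mem_ofPred_eq, mem_coe, mem_setPartitions, mem_Icc]
  constructor
  · rintro ⟨h1, h2, h3, h4, -⟩
    exact ⟨h1, h2, h3, h4⟩
  · rintro ⟨h1, h2, h3, h4⟩
    exact ⟨h1, h2, h3, h4, by omega⟩

lemma image_fiberBlock_mem_setPartitions {f : Fin a → Fin b} (hf : Function.Surjective f) :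
    univ.image (fiberBlock f) ∈ setPartitions a b := by
  refine mem_setPartitions.mpr ⟨?_, ?_, ?_, ?_⟩
  · rw [card_image_of_injective _ (fiberBlock_injective_of_surjective hf), card_univ,
      Fintype.card_fin]
  · simp only [mem_image, mem_univ, true_and, not_exists]
    intro y hy
    obtain ⟨x, hx⟩ := hf y
    simpa [hy] using (succ_mem_fiberBlock (f := f)).mpr hx
  · simp only [mem_image, mem_univ, true_and]
    rintro _ ⟨y, rfl⟩ _ ⟨y', rfl⟩ hne
    refine disjoint_left.mpr fun n hn hn' => hne ?_
    obtain ⟨x, rfl, rfl⟩ := mem_fiberBlock.mp hn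
    rw [succ_mem_fiberBlock.mp hn']
  · refine le_antisymm (Finset.sup_le_iff.mpr ?_) fun n hn => ?_
    · simp only [mem_image, mem_univ, true_and]
      rintro _ ⟨y, rfl⟩
      exact fiberBlock_subset f y
    · have hn := mem_Icc.mp hn
      let x : Fin a := ⟨n - 1, by omega⟩
      have hx : (x : ℕ) + 1 = n := by simp [x]; omega
      refine mem_sup.mpr ⟨fiberBlock f (f x), mem_image_of_mem _ (mem_univ _), ?_⟩
      exact hx ▸ succ_mem_fiberBlock.mpr rfl

lemma bijective_of_mem_setPartitions {C : Finset (Finset ℕ)} (hC : C ∈ setPartitions a b)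
    (e : Fin b ↪ C) : Function.Bijective e :=
  (Fintype.bijective_iff_injective_and_card e).mpr
    ⟨e.injective, by simp [(mem_setPartitions.mp hC).1]⟩

lemma exists_fiberBlock_eq {C : Finset (Finset ℕ)} (hC : C ∈ setPartitions a b)
    (e : Fin b ↪ C) : ∃ f : Fin a → Fin b, ∀ y, fiberBlock f y = e y := by
  obtain ⟨-, -, hdisj, hsup⟩ := mem_setPartitions.mp hC
  have hcover : ∀ x : Fin a, ∃ y, (x : ℕ) + 1 ∈ (e y : Finset ℕ) := by
    intro x
    have hx : (x : ℕ) + 1 ∈ C.sup id := hsup ▸ mem_Icc.mpr ⟨by omega, x.isLt⟩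
    obtain ⟨B, hB, hxB⟩ := mem_sup.mp hx
    obtain ⟨y, hy⟩ := (bijective_of_mem_setPartitions hC e).2 ⟨B, hB⟩
    exact ⟨y, by rwa [hy]⟩
  choose f hf using hcover
  refine ⟨f, fun y => ext fun n => ⟨?_, fun hn => ?_⟩⟩
  · intro hn
    obtain ⟨x, rfl, rfl⟩ := mem_fiberBlock.mp hn
    exact hf x
  · have hn' : n ∈ Icc 1 a := hsup ▸ mem_sup.mpr ⟨_, (e y).2, hn⟩
    obtain ⟨x, hx⟩ : ∃ x : Fin a, (x : ℕ) + 1 = n := ⟨⟨n - 1, by simp at hn'; omega⟩, by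
      simp at hn' ⊢; omega⟩
    subst hx
    refine succ_mem_fiberBlock.mpr (e.injective (Subtype.ext ?_))
    by_contra hne
    exact disjoint_left.mp (hdisj _ (e _).2 _ (e y).2 hne) (hf x) hn

lemma card_filter_surjective_image_fiberBlock_eq {C : Finset (Finset ℕ)}
    (hC : C ∈ setPartitions a b) :
    #{f : Fin a → Fin b | Function.Surjective f ∧ univ.image (fiberBlock f) = C} =
      b.factorial := by
  have hcard : Fintype.card C = b := by simp [(mem_setPartitions.mp hC).1]
  have hmem : ∀ f : Fin a → Fin b, univ.image (fiberBlock f) = C → ∀ y, fiberBlock f y ∈ C :=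
    fun f hf y => hf ▸ mem_image_of_mem _ (mem_univ y)
  have hemb : #(univ : Finset (Fin b ↪ C)) = b.factorial := by
    rw [card_univ, Fintype.card_embedding_eq, hcard, Fintype.card_fin, Nat.descFactorial_self]
  rw [← hemb]
  -- `f ↦ fiberBlock f` identifies the surjections with block set `C` with the enumerations of `C`
  refine card_bij (fun f hf => ⟨fun y => ⟨fiberBlock f y, hmem f (mem_filter.mp hf).2.2 y⟩,
    fun y y' h => fiberBlock_injective_of_surjective (mem_filter.mp hf).2.1
      (congrArg Subtype.val h)⟩) (fun _ _ => mem_univ _) ?_ ?_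
  · intro f _ f' _ h
    exact fiberBlock_injective (funext fun y => congrArg Subtype.val (DFunLike.congr_fun h y))
  · intro e _
    obtain ⟨f, hf⟩ := exists_fiberBlock_eq hC e
    have hsurj : Function.Surjective f := by
      intro y
      have hne : (e y : Finset ℕ) ≠ ∅ := fun h => (mem_setPartitions.mp hC).2.1 (h ▸ (e y).2)
      obtain ⟨n, hn⟩ := nonempty_iff_ne_empty.mpr hne
      obtain ⟨x, hx, -⟩ := mem_fiberBlock.mp ((hf y).symm ▸ hn)
      exact ⟨x, hx⟩
    have himage : univ.image (fiberBlock f) = C := by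
      ext B
      simp only [mem_image, mem_univ, true_and, hf]
      refine ⟨fun ⟨y, hy⟩ => hy ▸ (e y).2, fun hB => ?_⟩
      obtain ⟨y, hy⟩ := (bijective_of_mem_setPartitions hC e).2 ⟨B, hB⟩
      exact ⟨y, by rw [hy]⟩
    refine ⟨f, mem_filter.mpr ⟨mem_univ _, hsurj, himage⟩, ?_⟩
    ext y
    simp [hf]

lemma card_filter_surjective_fin (a b : ℕ) :
    #{f : Fin a → Fin b | Function.Surjective f} = b.factorial * stirling2 a b := by
  rw [stirling2_eq_card_setPartitions, mul_comm, ← smul_eq_mul, ← sum_const,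
    card_eq_sum_card_fiberwise fun f hf => image_fiberBlock_mem_setPartitions (mem_filter.mp hf).2]
  refine sum_congr rfl fun C hC => ?_
  rw [filter_filter, card_filter_surjective_image_fiberBlock_eq hC]

lemma card_filter_surjective (α β : Type*) [Fintype α] [Fintype β] [DecidableEq α] [DecidableEq β] :
    #{f : α → β | Function.Surjective f} =
      (Fintype.card β).factorial * stirling2 (Fintype.card α) (Fintype.card β) := by
  rw [← card_filter_surjective_fin]
  refine card_equiv ((Fintype.equivFin α).arrowCongr (Fintype.equivFin β)) fun f => ?_
  simp only [mem_filter, mem_univ, true_and]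
  change _ ↔ Function.Surjective (Fintype.equivFin β ∘ f ∘ (Fintype.equivFin α).symm)
  rw [EquivLike.comp_surjective, EquivLike.surjective_comp]

lemma stirling2_eq_zero_of_lt {a b : ℕ} (h : a < b) : stirling2 a b = 0 := by
  have hb := card_filter_surjective_fin a b
  rw [filter_false_of_mem fun f _ hf => by
    have := Fintype.card_le_of_surjective f hf
    simp only [Fintype.card_fin] at this
    omega, card_empty] at hb
  exact (mul_eq_zero.mp hb.symm).resolve_left b.factorial_ne_zero

end Surjections

section FunctionCounting
variable {α β γ : Type*} [Fintype α] [Fintype β] [Fintype γ] [DecidableEq α] [DecidableEq β]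
  [DecidableEq γ]

lemma card_filter_image_eq (T : Finset β) :
    #{h : α → β | univ.image h = T} = (#T).factorial * stirling2 (Fintype.card α) #T := by
  have himage : (univ.filter fun h : α → β => univ.image h = T) =
      (univ.filter fun h : α → T => Function.Surjective h).image fun h => Subtype.val ∘ h := by
    ext h
    simp only [mem_filter, mem_univ, true_and, mem_image]
    constructor
    · intro hh
      refine ⟨fun x => ⟨h x, by rw [← hh]; exact mem_image_of_mem _ (mem_univ x)⟩, fun t => ?_, rfl⟩
      obtain ⟨x, -, hx⟩ := mem_image.mp (hh.symm ▸ t.2 : (t : β) ∈ univ.image h)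
      exact ⟨x, Subtype.ext hx⟩
    · rintro ⟨h, hs, rfl⟩
      ext t
      simp only [mem_image, mem_univ, true_and, Function.comp_apply]
      refine ⟨fun ⟨x, hx⟩ => hx ▸ (h x).2, fun ht => ?_⟩
      obtain ⟨x, hx⟩ := hs ⟨t, ht⟩
      exact ⟨x, congrArg Subtype.val hx⟩
  rw [himage, card_image_of_injective _ Subtype.val_injective.comp_left,
    card_filter_surjective, Fintype.card_coe]

lemma card_filter_image_subset_card_image_eq (U : Finset β) (d : ℕ) :
    #{h : α → β | univ.image h ⊆ U ∧ #(univ.image h) = d} =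
      (#U).choose d * (d.factorial * stirling2 (Fintype.card α) d) := by
  rw [card_eq_sum_card_fiberwise (f := fun h => univ.image h) (t := powersetCard d U)
    fun h hh => mem_powersetCard.mpr (mem_filter.mp hh).2, ← card_powersetCard, ← smul_eq_mul,
    ← sum_const]
  refine sum_congr rfl fun T hT => ?_
  obtain ⟨hTU, hTd⟩ := mem_powersetCard.mp hT
  rw [filter_filter, ← hTd, ← card_filter_image_eq T]
  congr 1
  exact filter_congr fun h _ => ⟨fun hh => hh.2, by rintro rfl; exact ⟨⟨hTU, rfl⟩, rfl⟩⟩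

/-- Splitting `g` into its restrictions to `A` and to `Aᶜ`. -/
lemma card_filter_preimage_compl_eq (S : Finset β) (A : Finset γ) (d : ℕ) :
    #{g : γ → β | univ.filter (fun x => g x ∉ S) = A ∧ #(univ.image g \ S) = d} =
      #{h : A → β | univ.image h ⊆ Sᶜ ∧ #(univ.image h) = d} *
        #S ^ (Fintype.card γ - #A) := by
  have hS : #(Fintype.piFinset fun _ : {x // x ∉ A} => S) = #S ^ (Fintype.card γ - #A) := by
    rw [Fintype.card_piFinset, prod_const, card_univ, Fintype.card_subtype_compl,
      Fintype.card_coe]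
  rw [← hS, ← card_product]
  refine card_equiv (Equiv.piEquivPiSubtypeProd (· ∈ A) fun _ => β) fun g => ?_
  simp only [mem_filter, mem_univ, true_and, mem_product, Fintype.mem_piFinset,
    Equiv.piEquivPiSubtypeProd_apply]
  have hA : univ.filter (fun x => g x ∉ S) = A ↔
      (∀ x : A, g x ∉ S) ∧ ∀ x : {x // x ∉ A}, g x ∈ S := by
    simp only [Finset.ext_iff, mem_filter, mem_univ, true_and, Subtype.forall]
    refine ⟨fun h => ⟨fun x hx => (h x).2 hx, fun x hx => ?_⟩, fun ⟨h, h'⟩ x => ⟨?_, h x⟩⟩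
    · by_contra hS
      exact hx ((h x).1 hS)
    · intro hS
      by_contra hx
      exact hS (h' x hx)
  have hsub : univ.image (fun x : A => g x) ⊆ Sᶜ ↔ ∀ x : A, g x ∉ S := by
    simp [subset_iff]
  have himage (h : ∀ x : A, g x ∉ S) (h' : ∀ x : {x // x ∉ A}, g x ∈ S) :
      univ.image g \ S = univ.image (fun x : A => g x) := by
    ext y
    simp only [mem_sdiff, mem_image, mem_univ, true_and, Subtype.exists]
    constructor
    · rintro ⟨⟨x, rfl⟩, hy⟩
      by_cases hx : x ∈ A
      · exact ⟨x, hx, rfl⟩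
      · exact absurd (h' ⟨x, hx⟩) hy
    · rintro ⟨x, hx, rfl⟩
      exact ⟨⟨x, rfl⟩, h ⟨x, hx⟩⟩
  rw [hA, hsub]
  constructor
  · rintro ⟨⟨h, h'⟩, hd⟩
    exact ⟨⟨h, himage h h' ▸ hd⟩, h'⟩
  · rintro ⟨⟨h, hd⟩, h'⟩
    exact ⟨⟨h, h'⟩, himage h h' ▸ hd⟩

lemma card_filter_card_image_union_eq (S : Finset β) (hγ : Fintype.card γ = #S) (j : ℕ) :
    #{g : γ → β | #(univ.image g ∪ S) = j} = sEntry (Fintype.card β) #S j := by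
  rw [sEntry]
  split_ifs with hij
  swap
  · refine card_eq_zero.mpr (filter_false_of_mem fun g _ hg => hij ?_)
    exact hg ▸ card_le_card subset_union_right
  have hcard (g : γ → β) : #(univ.image g ∪ S) = j ↔ #(univ.image g \ S) = j - #S := by
    have := card_sdiff_add_card (univ.image g) S
    omega
  have hfiber (A : Finset γ) :
      #{g ∈ {g : γ → β | #(univ.image g \ S) = j - #S} | univ.filter (fun x => g x ∉ S) = A} =
        (Fintype.card β - #S).choose (j - #S) *
          ((j - #S).factorial * stirling2 #A (j - #S)) * #S ^ (#S - #A) := by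
    rw [filter_filter, filter_congr fun g _ => and_comm, card_filter_preimage_compl_eq,
      card_filter_image_subset_card_image_eq, card_compl, Fintype.card_coe, hγ]
  rw [filter_congr fun g _ => hcard g, card_eq_sum_card_fiberwise
    (f := fun g => univ.filter fun x => g x ∉ S) fun _ _ => mem_powerset.mpr (subset_univ _),
    sum_congr rfl fun A _ => hfiber A, sum_powerset_apply_card (f := fun α =>
      (Fintype.card β - #S).choose (j - #S) * ((j - #S).factorial * stirling2 α (j - #S)) *
        #S ^ (#S - α)), card_univ, hγ, mul_sum]
  rw [← sum_subset (s₁ := Icc (j - #S) #S) (fun α hα => by simp at hα ⊢; omega) fun α hα hα' => by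
    simp only [mem_range, mem_Icc] at hα hα'
    rw [stirling2_eq_zero_of_lt (by omega)]
    simp]
  refine sum_congr rfl fun α _ => ?_
  rw [smul_eq_mul]
  ring

end FunctionCounting

lemma filter_le_union_image_add {X Y : Finset ℕ} {N : ℕ} (hX : ∀ x ∈ X, x ≤ N)
    (hY : ∀ y ∈ Y, 0 < y) : (X ∪ Y.image (· + N)).filter (· ≤ N) = X := by
  ext x
  simp only [mem_filter, mem_union, mem_image]
  constructor
  · rintro ⟨hx | ⟨y, hy, rfl⟩, hle⟩
    · exact hx
    · have := hY y hy
      omega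
  · exact fun hx => ⟨Or.inl hx, hX x hx⟩

lemma filter_lt_union_image_add {X Y : Finset ℕ} {N : ℕ} (hX : ∀ x ∈ X, x ≤ N)
    (hY : ∀ y ∈ Y, 0 < y) : (X ∪ Y.image (· + N)).filter (N < ·) = Y.image (· + N) := by
  ext x
  simp only [mem_filter, mem_union, mem_image]
  constructor
  · rintro ⟨hx | hx, hlt⟩
    · exact absurd (hX x hx) (not_le.mpr hlt)
    · exact hx
  · rintro ⟨y, hy, rfl⟩
    have := hY y hy
    exact ⟨Or.inr ⟨y, hy, rfl⟩, by omega⟩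

section Vectors
variable {n k : ℕ}

def vSupp (Pi : Fin n → Finset ℕ) : Finset (Fin n) := univ.filter fun q => Pi q ≠ ∅

lemma nne_eq_card_vSupp (Pi : Fin n → Finset ℕ) : nne Pi = #(vSupp Pi) := rfl

lemma mem_vSupp {Pi : Fin n → Finset ℕ} {q : Fin n} : q ∈ vSupp Pi ↔ (Pi q).Nonempty := by
  simp [vSupp, nonempty_iff_ne_empty]

lemma mem_dotAct {Pi : Fin n → Finset ℕ} {h : Fin n → Fin n} {q : Fin n} {x : ℕ} :
    x ∈ dotAct Pi h q ↔ ∃ p, h p = q ∧ x ∈ Pi p := by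
  simp [dotAct]

lemma mem_univ_sup {Pi : Fin n → Finset ℕ} {x : ℕ} : x ∈ univ.sup Pi ↔ ∃ p, x ∈ Pi p := by
  simp [mem_sup]

lemma vSupp_dotAct (Pi : Fin n → Finset ℕ) (h : Fin n → Fin n) :
    vSupp (dotAct Pi h) = (vSupp Pi).image h := by
  ext q
  simp only [mem_vSupp, mem_image, Finset.Nonempty, mem_dotAct]
  constructor
  · rintro ⟨x, p, rfl, hx⟩
    exact ⟨p, ⟨x, hx⟩, rfl⟩
  · rintro ⟨p, ⟨x, hx⟩, rfl⟩
    exact ⟨x, p, rfl, hx⟩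

lemma dotAct_congr {Pi : Fin n → Finset ℕ} {h h' : Fin n → Fin n}
    (hh : ∀ p ∈ vSupp Pi, h p = h' p) : dotAct Pi h = dotAct Pi h' := by
  funext q
  ext x
  simp only [mem_dotAct]
  constructor <;> rintro ⟨p, rfl, hx⟩
  · exact ⟨p, (hh p (mem_vSupp.mpr ⟨x, hx⟩)).symm, hx⟩
  · exact ⟨p, hh p (mem_vSupp.mpr ⟨x, hx⟩), hx⟩

lemma eqOn_vSupp_of_dotAct_eq {Pi : Fin n → Finset ℕ} {h h' : Fin n → Fin n}
    (hdisj : ∀ p q, p ≠ q → Disjoint (Pi p) (Pi q)) (heq : dotAct Pi h = dotAct Pi h') :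
    ∀ p ∈ vSupp Pi, h p = h' p := by
  intro p hp
  obtain ⟨x, hx⟩ := mem_vSupp.mp hp
  have hx' : x ∈ dotAct Pi h' (h p) := heq ▸ mem_dotAct.mpr ⟨p, rfl, hx⟩
  obtain ⟨p', hp', hxp'⟩ := mem_dotAct.mp hx'
  obtain rfl : p = p' := by
    by_contra hne
    exact disjoint_left.mp (hdisj p p' hne) hx hxp'
  exact hp'.symm

lemma univ_sup_dotAct (Pi : Fin n → Finset ℕ) (h : Fin n → Fin n) :
    univ.sup (dotAct Pi h) = univ.sup Pi := by
  ext x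
  simp only [mem_univ_sup, mem_dotAct]
  constructor
  · rintro ⟨q, p, -, hx⟩
    exact ⟨p, hx⟩
  · rintro ⟨p, hx⟩
    exact ⟨h p, p, rfl, hx⟩

lemma vSupp_vUnion_vUp (A B : Fin n → Finset ℕ) :
    vSupp (vUnion A (vUp B)) = vSupp A ∪ vSupp B := by
  ext q
  simp [mem_vSupp, vUnion, vUp]

namespace IsEXP
variable {Pi A B A' B' : Fin n → Finset ℕ}

lemma bounds_of_mem (hE : IsEXP k Pi) {q : Fin n} {x : ℕ} (hx : x ∈ Pi q) :
    1 ≤ x ∧ x ≤ 2 ^ k :=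
  mem_Icc.mp (hE.2 ▸ le_sup (f := Pi) (mem_univ q) hx)

lemma vMax_eq (hE : IsEXP k Pi) : vMax Pi = 2 ^ k := by
  rw [vMax, hE.2]
  exact le_antisymm (Finset.sup_le fun x hx => (mem_Icc.mp hx).2)
    (le_sup (f := id) (mem_Icc.mpr ⟨Nat.one_le_two_pow, le_rfl⟩))

lemma dotAct (hE : IsEXP k Pi) (h : Fin n → Fin n) : IsEXP k (dotAct Pi h) := by
  refine ⟨fun q q' hne => disjoint_left.mpr fun x hx hx' => ?_, univ_sup_dotAct Pi h ▸ hE.2⟩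
  obtain ⟨p, rfl, hp⟩ := mem_dotAct.mp hx
  obtain ⟨p', rfl, hp'⟩ := mem_dotAct.mp hx'
  exact disjoint_left.mp (hE.1 p p' fun h => hne (h ▸ rfl)) hp hp'

lemma vUp_eq (hE : IsEXP k Pi) : vUp Pi = fun q => (Pi q).image (· + 2 ^ k) := by
  unfold vUp
  rw [hE.vMax_eq]

lemma vUnion_vUp (hA : IsEXP k A) (hB : IsEXP k B) : IsEXP (k + 1) (vUnion A (vUp B)) := by
  have hlow_high : ∀ q q', Disjoint (A q) ((B q').image (· + 2 ^ k)) := by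
    refine fun q q' => disjoint_left.mpr fun x hx hx' => ?_
    obtain ⟨y, hy, rfl⟩ := mem_image.mp hx'
    have := hA.bounds_of_mem hx
    have := hB.bounds_of_mem hy
    omega
  rw [hB.vUp_eq]
  refine ⟨fun q q' hne => ?_, ?_⟩
  · simp only [vUnion, disjoint_union_left, disjoint_union_right]
    exact ⟨⟨hA.1 q q' hne, (hlow_high q' q).symm⟩, ⟨hlow_high q q',
      (disjoint_image (add_left_injective _)).mpr (hB.1 q q' hne)⟩⟩
  · ext x
    simp only [mem_univ_sup, vUnion, mem_union, mem_image, mem_Icc, pow_succ]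
    constructor
    · rintro ⟨q, hx | ⟨y, hy, rfl⟩⟩
      · have := hA.bounds_of_mem hx
        omega
      · have := hB.bounds_of_mem hy
        omega
    · rintro ⟨h1, h2⟩
      by_cases hx : x ≤ 2 ^ k
      · obtain ⟨q, hq⟩ := mem_univ_sup.mp (hA.2 ▸ mem_Icc.mpr ⟨h1, hx⟩ : x ∈ univ.sup A)
        exact ⟨q, Or.inl hq⟩
      · obtain ⟨q, hq⟩ := mem_univ_sup.mp
          (hB.2 ▸ mem_Icc.mpr ⟨by omega, by omega⟩ : x - 2 ^ k ∈ univ.sup B)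
        exact ⟨q, Or.inr ⟨x - 2 ^ k, hq, by omega⟩⟩

lemma eq_of_vUnion_vUp_eq (hA : IsEXP k A) (hB : IsEXP k B) (hA' : IsEXP k A')
    (hB' : IsEXP k B') (h : vUnion A (vUp B) = vUnion A' (vUp B')) : A = A' ∧ B = B' := by
  rw [hB.vUp_eq, hB'.vUp_eq] at h
  have hle : ∀ {C : Fin n → Finset ℕ}, IsEXP k C → ∀ q, ∀ x ∈ C q, x ≤ 2 ^ k :=
    fun hC _ _ hx => (hC.bounds_of_mem hx).2
  have hpos : ∀ {C : Fin n → Finset ℕ}, IsEXP k C → ∀ q, ∀ x ∈ C q, 0 < x :=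
    fun hC _ _ hx => (hC.bounds_of_mem hx).1
  constructor
  · funext q
    have hq := congrFun h q
    simp only [vUnion] at hq
    rw [← filter_le_union_image_add (hle hA q) (hpos hB q), hq,
      filter_le_union_image_add (hle hA' q) (hpos hB' q)]
  · funext q
    have hq := congrFun h q
    simp only [vUnion] at hq
    apply image_injective (add_left_injective (2 ^ k))
    rw [← filter_lt_union_image_add (hle hA q) (hpos hB q), hq,
      filter_lt_union_image_add (hle hA' q) (hpos hB' q)]

end IsEXP

end Vectors

lemma sum_eq_sum_fin_card_filter_mul {ι : Type*} {n : ℕ} {s : Finset ι} {φ : ι → ℕ}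
    (hφ : ∀ x ∈ s, 1 ≤ φ x ∧ φ x ≤ n) (F : ℕ → ℕ) :
    ∑ x ∈ s, F (φ x) = ∑ i : Fin n, #{x ∈ s | φ x = i + 1} * F (i + 1) := by
  rw [Fin.sum_univ_eq_sum_range (fun i => #{x ∈ s | φ x = i + 1} * F (i + 1)),
    ← sum_fiberwise_of_maps_to (g := fun x => φ x - 1) (t := range n) fun x hx => by
      have := hφ x hx
      simp only [mem_range]
      omega]
  refine sum_congr rfl fun i _ => ?_
  have hfiber : {x ∈ s | φ x - 1 = i} = {x ∈ s | φ x = i + 1} :=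
    filter_congr fun x hx => by have := hφ x hx; omega
  rw [hfiber, sum_congr rfl fun x hx => by rw [(mem_filter.mp hx).2], sum_const, smul_eq_mul]

section Generations
variable {n k : ℕ}

lemma IsEXP.one_le_nne {Pi : Fin n → Finset ℕ} (hE : IsEXP k Pi) : 1 ≤ nne Pi := by
  obtain ⟨q, hq⟩ := mem_univ_sup.mp (hE.2 ▸ mem_Icc.mpr ⟨le_rfl, Nat.one_le_two_pow⟩ :
    1 ∈ univ.sup Pi)
  exact card_pos.mpr ⟨q, mem_vSupp.mpr ⟨1, hq⟩⟩

lemma nne_le (Pi : Fin n → Finset ℕ) : nne Pi ≤ n :=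
  (card_filter_le _ _).trans (card_univ.trans (Fintype.card_fin n)).le

def stepL (L : Fin n → Finset ℕ) (f : Fin n → Fin n) : Fin n → Finset ℕ :=
  vUnion (dotAct L f) (vUp L)

def stepP (P : Fin n → Finset ℕ) (g : Fin n → Fin n) : Fin n → Finset ℕ :=
  vUnion P (vUp (dotAct P g))

/-- The properties shared by the two coordinate maps of a U-pair step; they are all the count
uses. -/
structure IsUStep (step : (Fin n → Finset ℕ) → (Fin n → Fin n) → Fin n → Finset ℕ) : Prop where
  isEXP {k : ℕ} {L : Fin n → Finset ℕ} (f : Fin n → Fin n) :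
    IsEXP k L → IsEXP (k + 1) (step L f)
  vSupp_eq (L : Fin n → Finset ℕ) (f : Fin n → Fin n) :
    vSupp (step L f) = (vSupp L).image f ∪ vSupp L
  congr {L : Fin n → Finset ℕ} {f f' : Fin n → Fin n} :
    (∀ p ∈ vSupp L, f p = f' p) → step L f = step L f'
  inj {k : ℕ} {L L' : Fin n → Finset ℕ} {f f' : Fin n → Fin n} :
    IsEXP k L → IsEXP k L' → step L f = step L' f' → L = L' ∧ ∀ p ∈ vSupp L, f p = f' p

lemma isUStep_stepL : IsUStep (stepL (n := n)) where
  isEXP f hL := (hL.dotAct f).vUnion_vUp hL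
  vSupp_eq L f := by rw [stepL, vSupp_vUnion_vUp, vSupp_dotAct]
  congr h := by rw [stepL, stepL, dotAct_congr h]
  inj hL hL' h := by
    obtain ⟨hdot, rfl⟩ := (hL.dotAct _).eq_of_vUnion_vUp_eq hL (hL'.dotAct _) hL' h
    exact ⟨rfl, eqOn_vSupp_of_dotAct_eq hL.1 hdot⟩

lemma isUStep_stepP : IsUStep (stepP (n := n)) where
  isEXP g hP := hP.vUnion_vUp (hP.dotAct g)
  vSupp_eq P g := by rw [stepP, vSupp_vUnion_vUp, vSupp_dotAct, union_comm]
  congr h := by rw [stepP, stepP, dotAct_congr h]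
  inj hP hP' h := by
    obtain ⟨rfl, hdot⟩ := hP.eq_of_vUnion_vUp_eq (hP.dotAct _) hP' (hP'.dotAct _) h
    exact ⟨rfl, eqOn_vSupp_of_dotAct_eq hP.1 hdot⟩

def baseVec (n : ℕ) : Fin n → Finset ℕ := fun p => if p.val = 0 then {1} else ∅

def generation (step : (Fin n → Finset ℕ) → (Fin n → Fin n) → Fin n → Finset ℕ) :
    ℕ → Finset (Fin n → Finset ℕ)
  | 0 => {baseVec n}
  | k + 1 => (generation step k).biUnion fun L => univ.image (step L)

lemma isEXP_baseVec (hn : 0 < n) : IsEXP 0 (baseVec n) := by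
  refine ⟨fun p q hne => ?_, ?_⟩
  · by_cases hp : p.val = 0 <;> by_cases hq : q.val = 0
    · exact absurd (Fin.ext (hp.trans hq.symm)) hne
    all_goals simp [baseVec, hp, hq]
  · ext x
    simp only [mem_univ_sup, baseVec, pow_zero, Icc_self, mem_singleton]
    constructor
    · rintro ⟨p, hp⟩
      split_ifs at hp
      · exact mem_singleton.mp hp
      · simp at hp
    · rintro rfl
      exact ⟨⟨0, hn⟩, by simp⟩

lemma nne_baseVec (hn : 0 < n) : nne (baseVec n) = 1 := by
  rw [nne_eq_card_vSupp, card_eq_one]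
  refine ⟨⟨0, hn⟩, ext fun q => ?_⟩
  by_cases hq : (q : ℕ) = 0 <;> simp [mem_vSupp, baseVec, Fin.ext_iff, hq]

namespace IsUStep
variable {step : (Fin n → Finset ℕ) → (Fin n → Fin n) → Fin n → Finset ℕ}

lemma isEXP_of_mem_generation (hs : IsUStep step) (hn : 0 < n) :
    ∀ {k : ℕ} {L : Fin n → Finset ℕ}, L ∈ generation step k → IsEXP k L
  | 0, L, hL => by
    rw [generation, mem_singleton] at hL
    exact hL ▸ isEXP_baseVec hn
  | k + 1, L, hL => by
    obtain ⟨L', hL', hL⟩ := mem_biUnion.mp hL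
    obtain ⟨f, -, rfl⟩ := mem_image.mp hL
    exact hs.isEXP f (hs.isEXP_of_mem_generation hn hL')

lemma card_filter_image_nne_eq (hs : IsUStep step) {L : Fin n → Finset ℕ} (hL : IsEXP k L)
    (j : ℕ) : #{M ∈ univ.image (step L) | nne M = j} = sEntry n (nne L) j := by
  let extend (g : vSupp L → Fin n) (p : Fin n) : Fin n := if h : p ∈ vSupp L then g ⟨p, h⟩ else p
  have himage : univ.image (step L) = univ.image fun g => step L (extend g) := by
    ext M
    simp only [mem_image, mem_univ, true_and]
    constructor
    · rintro ⟨f, rfl⟩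
      exact ⟨fun p => f p, hs.congr fun p hp => by simp [extend, hp]⟩
    · rintro ⟨g, rfl⟩
      exact ⟨extend g, rfl⟩
  have hinj : Function.Injective fun g => step L (extend g) := by
    intro g g' h
    funext p
    simpa [extend, p.2] using (hs.inj hL hL h).2 p p.2
  have hnne (g : vSupp L → Fin n) : nne (step L (extend g)) = #(univ.image g ∪ vSupp L) := by
    rw [nne_eq_card_vSupp, hs.vSupp_eq]
    congr 2
    ext y
    simp only [mem_image, mem_univ, true_and, Subtype.exists]
    exact ⟨fun ⟨p, hp, hy⟩ => ⟨p, hp, by simpa [extend, hp] using hy⟩,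
      fun ⟨p, hp, hy⟩ => ⟨p, hp, by simpa [extend, hp] using hy⟩⟩
  rw [himage, filter_image, card_image_of_injective _ hinj, filter_congr fun g _ => by rw [hnne],
    card_filter_card_image_union_eq _ (Fintype.card_coe _), Fintype.card_fin, nne_eq_card_vSupp]

lemma card_filter_generation_nne_eq (hs : IsUStep step) (hn : 0 < n) (k : ℕ) (j : Fin n) :
    #{L ∈ generation step k | nne L = j + 1} = (Smat n ^ k) ⟨0, hn⟩ j := by
  induction k generalizing j with
  | zero =>
    rw [generation, filter_singleton, nne_baseVec hn, pow_zero, Matrix.one_apply]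
    by_cases hj : (⟨0, hn⟩ : Fin n) = j
    · simp [← hj]
    · have hj' : (j : ℕ) ≠ 0 := fun h => hj (Fin.ext h.symm)
      simp [hj, hj']
  | succ k ih =>
    have hdisj : (generation step k : Set (Fin n → Finset ℕ)).PairwiseDisjoint
        fun L => univ.image (step L) := by
      intro L hL L' hL' hne
      refine disjoint_left.mpr fun M hM hM' => hne ?_
      obtain ⟨f, -, rfl⟩ := mem_image.mp hM
      obtain ⟨f', -, hf'⟩ := mem_image.mp hM'
      exact ((hs.inj (hs.isEXP_of_mem_generation hn hL) (hs.isEXP_of_mem_generation hn hL')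
        hf'.symm).1)
    rw [generation, filter_biUnion, card_biUnion fun L hL L' hL' hne =>
        disjoint_filter_filter (hdisj hL hL' hne),
      sum_congr rfl fun L hL =>
        hs.card_filter_image_nne_eq (hs.isEXP_of_mem_generation hn hL) _,
      sum_eq_sum_fin_card_filter_mul (F := fun i => sEntry n i (j + 1)) fun L hL =>
        ⟨(hs.isEXP_of_mem_generation hn hL).one_le_nne, nne_le L⟩]
    simp only [ih, pow_succ, Matrix.mul_apply, Smat]

lemma card_generation (hs : IsUStep step) (hn : 0 < n) (k : ℕ) :
    #(generation step k) = ∑ j, (Smat n ^ k) ⟨0, hn⟩ j := by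
  rw [card_eq_sum_ones, sum_eq_sum_fin_card_filter_mul (φ := nne) (F := fun _ => 1) fun L hL =>
    ⟨(hs.isEXP_of_mem_generation hn hL).one_le_nne, nne_le L⟩]
  simp only [mul_one, hs.card_filter_generation_nne_eq hn]

end IsUStep

lemma Uset_eq_generation_prod (m n k : ℕ) :
    Uset m n k = (generation (stepL (n := m)) k : Set _) ×ˢ
      (generation (stepP (n := n)) k : Set _) := by
  induction k with
  | zero =>
    ext ⟨L, P⟩
    simp only [Uset, generation, Set.mem_ofPred_eq, Set.mem_prod, coe_singleton,
      Set.mem_singleton_iff]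
    exact Prod.ext_iff
  | succ k ih =>
    ext ⟨M, Q⟩
    simp only [Uset, Set.mem_ofPred_eq, ih, Set.mem_prod, mem_coe, generation, mem_biUnion,
      mem_image, mem_univ, true_and, Prod.ext_iff]
    constructor
    · rintro ⟨L, P, ⟨hL, hP⟩, f, g, rfl, rfl⟩
      exact ⟨⟨L, hL, f, rfl⟩, ⟨P, hP, g, rfl⟩⟩
    · rintro ⟨⟨L, hL, f, rfl⟩, ⟨P, hP, g, rfl⟩⟩
      exact ⟨L, P, ⟨hL, hP⟩, f, g, rfl, rfl⟩

end Generations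

theorem stmt13 (m n k : ℕ) (hm : 1 ≤ m) (hn : 1 ≤ n) :
    (Uset m n k).ncard =
      ∑ l' : Fin m, ∑ l'' : Fin n,
        (Smat m ^ k) ⟨0, by omega⟩ l' * (Smat n ^ k) ⟨0, by omega⟩ l'' := by
  rw [Uset_eq_generation_prod, ← coe_product, Set.ncard_coe_finset, card_product,
    isUStep_stepL.card_generation hm, isUStep_stepP.card_generation hn, sum_mul_sum]
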